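/- Let K be a pure d-dimensional simplicial complex and suppose there is a set F of facets of K such that K ∖ F is collapsible. Then |F| = β̃_d(K;ℤ₂), β̃_i(K;ℤ₂) = 0 for all i with 0 ≤ i ≤ d−1, and consequently the reduced Euler characteristic satisfies χ̃(K) = (−1)^d · β̃_d(K;ℤ₂). -/

import Mathlib

/-! Common definitions: finite abstract simplicial complexes, links, stars,
barycentric subdivision, joins, collapsibility, shellability, vertex
decomposability, star decomposability (also "in vertices"), and simplicial
homology (reduced, over ℤ and ℤ₂). -/

namespace Paper

open Finset

variable {V : Type*} [DecidableEq V]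

/-- `K` is a (finite, abstract) simplicial complex: downward closed family of finsets. -/
def IsCplx (K : Finset (Finset V)) : Prop :=
  ∀ σ ∈ K, ∀ τ ⊆ σ, τ ∈ K

/-- Vertex set of a complex. -/
def verts (K : Finset (Finset V)) : Finset V := K.sup id

/-- Dimension of a complex (as an integer; `-1` for `∅` and `{∅}`). -/
def dim (K : Finset (Finset V)) : ℤ := ((K.sup Finset.card : ℕ) : ℤ) - 1

/-- The facets (inclusion-maximal faces) of `K`. -/
def facets (K : Finset (Finset V)) : Finset (Finset V) :=
  K.filter fun σ => ∀ τ ∈ K, σ ⊆ τ → σ = τ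

/-- `K` is pure `d`-dimensional: it is nonempty, every face has dimension at most `d`
and every face is contained in a face of dimension exactly `d`. -/
def PureDim (K : Finset (Finset V)) (d : ℤ) : Prop :=
  K.Nonempty ∧ (∀ σ ∈ K, (σ.card : ℤ) ≤ d + 1) ∧
    ∀ σ ∈ K, ∃ τ ∈ K, σ ⊆ τ ∧ (τ.card : ℤ) = d + 1

/-- Link of a face. -/
def lk (σ : Finset V) (K : Finset (Finset V)) : Finset (Finset V) :=
  (K.filter fun τ => σ ⊆ τ).image fun τ => τ \ σ

/-- Closed star of a face. -/
def star (σ : Finset V) (K : Finset (Finset V)) : Finset (Finset V) :=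
  K.filter fun τ => τ ∪ σ ∈ K

/-- Union of the closed stars of a set of vertices. -/
def starSet (S : Finset V) (K : Finset (Finset V)) : Finset (Finset V) :=
  K.filter fun τ => ∃ v ∈ S, τ ∪ {v} ∈ K

/-- Subcomplex induced on a vertex set `S`. -/
def induced (S : Finset V) (K : Finset (Finset V)) : Finset (Finset V) :=
  K.filter fun σ => σ ⊆ S

/-- Deletion of a vertex:  `K - v`. -/
def deleteV (v : V) (K : Finset (Finset V)) : Finset (Finset V) :=
  K.filter fun σ => v ∉ σ

/-- The full simplex on vertex set `σ`. -/
def simplexCplx (σ : Finset V) : Finset (Finset V) := σ.powerset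

/-- The boundary `∂σ` of the simplex on `σ`: all proper subsets of `σ`. -/
def bdSimplex (σ : Finset V) : Finset (Finset V) := σ.powerset.erase σ

/-- Barycentric subdivision: vertices are the nonempty faces of `K`, faces are
chains of nonempty faces of `K`. -/
def sd (K : Finset (Finset V)) : Finset (Finset (Finset V)) :=
  if K = ∅ then ∅ else
    K.powerset.filter fun c => (∅ ∉ c) ∧ ∀ σ ∈ c, ∀ τ ∈ c, σ ⊆ τ ∨ τ ⊆ σ

/-- Join of two simplicial complexes (on the disjoint union of vertex types). -/
def join {α β : Type*} [DecidableEq α] [DecidableEq β]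
    (X : Finset (Finset α)) (Y : Finset (Finset β)) : Finset (Finset (α ⊕ β)) :=
  (X ×ˢ Y).image fun p => p.1.image Sum.inl ∪ p.2.image Sum.inr

/-- `K'` arises from `K` by an elementary collapse: remove a free face `σ`
together with the unique face `τ` properly containing it. -/
def ElemCollapse (K K' : Finset (Finset V)) : Prop :=
  ∃ σ ∈ K, ∃ τ ∈ K, σ ⊂ τ ∧ (∀ ρ ∈ K, σ ⊂ ρ → ρ = τ) ∧ K' = (K.erase σ).erase τ

/-- `K` collapses to `K'`. -/
def CollapsesTo (K K' : Finset (Finset V)) : Prop :=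
  Relation.ReflTransGen ElemCollapse K K'

/-- `K` is collapsible: it collapses to a single vertex. -/
def Collapsible (K : Finset (Finset V)) : Prop :=
  ∃ w : V, CollapsesTo K ({∅, {w}} : Finset (Finset V))

/-- The removal-collapsibility condition: `K` is empty, or becomes collapsible
after removal of a set of facets. -/
def RC (K : Finset (Finset V)) : Prop :=
  K = ∅ ∨ ∃ F ⊆ facets K, Collapsible (K \ F)

/-- The hereditary removal-collapsibility condition: the link of every face
(including the empty face, whose link is `K` itself) satisfies (RC). -/
def HRC (K : Finset (Finset V)) : Prop :=
  ∀ σ ∈ K, RC (lk σ K)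

/-- `K` is shellable: there is a total order of its facets such that each facet
meets the union of the previous ones in a pure complex of codimension one. -/
def Shellable (K : Finset (Finset V)) : Prop :=
  ∃ L : List (Finset V), L.Nodup ∧ L.toFinset = facets K ∧
    ∀ i : ℕ, (hi : i < L.length) → 1 ≤ i →
      PureDim ((L.get ⟨i, hi⟩).powerset ∩ ((L.take i).map Finset.powerset).foldr (· ∪ ·) ∅)
        (((L.get ⟨i, hi⟩).card : ℤ) - 2)

/-- Vertex decomposability (Provan–Billera) of a pure complex. -/
inductive VD : Finset (Finset V) → Prop
  | simplex (σ : Finset V) : VD σ.powerset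
  | shed (K : Finset (Finset V)) (v : V) (hv : {v} ∈ K)
      (hdel : PureDim (deleteV v K) (dim K)) (hVDdel : VD (deleteV v K))
      (hlk : PureDim (lk {v} K) (dim K - 1)) (hVDlk : VD (lk {v} K)) : VD K

/-- `L` is a shedding order of `K` (a total order on `V(K)`, given as a
duplicate-free list, witnessing vertex decomposability; once a simplex is
reached, an arbitrary order of its vertices qualifies). -/
inductive SheddingOrder : List V → Finset (Finset V) → Prop
  | simplex (σ : Finset V) (L : List V) (hnd : L.Nodup) (hfin : L.toFinset = σ) :
      SheddingOrder L σ.powerset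
  | cons (v : V) (L : List V) (K : Finset (Finset V)) (hv : {v} ∈ K) (hvL : v ∉ L)
      (hcov : insert v L.toFinset = verts K)
      (hdel : PureDim (deleteV v K) (dim K))
      (hrest : SheddingOrder L (deleteV v K))
      (hlk : PureDim (lk {v} K) (dim K - 1)) (hVDlk : VD (lk {v} K)) :
      SheddingOrder (v :: L) K

/-- `W` induces a star partition of `X`: the stars of the vertices of `W`
cover `X` and no two distinct vertices of `W` lie in a common face. -/
def StarPartition (W : Finset V) (X : Finset (Finset V)) : Prop :=
  (∀ σ ∈ X, ∃ w ∈ W, σ ∪ {w} ∈ X) ∧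
    ∀ w₁ ∈ W, ∀ w₂ ∈ W, w₁ ≠ w₂ → ¬∃ σ ∈ X, w₁ ∈ σ ∧ w₂ ∈ σ

/-- The overlap `O_X(x, W') = lk(x,X) ∩ st(W',X)`. -/
def overlap (X : Finset (Finset V)) (x : V) (W' : Finset V) : Finset (Finset V) :=
  lk {x} X ∩ starSet W' X

/-- Star decomposability of the pair `(X, X₀)`.  The total order on the set `W`
inducing the star partition is encoded as a duplicate-free list `L` (earlier in
the list = smaller in the order). -/
inductive StarDec : Finset (Finset V) → Finset V → Prop
  | base : StarDec ({∅} : Finset (Finset V)) (∅ : Finset V)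
  | step (X : Finset (Finset V)) (X₀ : Finset V) (k : ℤ) (hk : 0 ≤ k) (hpure : PureDim X k)
      (L : List V) (hne : L ≠ []) (hnd : L.Nodup) (hsub : L.toFinset ⊆ verts X)
      (hsp : StarPartition L.toFinset X)
      (horder : ∃ i < L.length, X₀ = (L.drop i).toFinset)
      (U : ℕ → Finset V)
      (hUne : ∀ i, i + 1 < L.length → (U i).Nonempty)
      (hUsub : ∀ i, (hi : i + 1 < L.length) →
        U i ⊆ verts (lk {L.get ⟨i, Nat.lt_of_succ_lt hi⟩} X))
      (hUst : ∀ i, (hi : i + 1 < L.length) →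
        starSet (U i) (lk {L.get ⟨i, Nat.lt_of_succ_lt hi⟩} X) =
          overlap X (L.get ⟨i, Nat.lt_of_succ_lt hi⟩) ((L.drop (i + 1)).toFinset))
      (hlink : ∀ i, (hi : i + 1 < L.length) →
        StarDec (lk {L.get ⟨i, Nat.lt_of_succ_lt hi⟩} X) (U i))
      (Ulast : Finset V)
      (hlast : StarDec (lk {L.getLast hne} X) Ulast) :
      StarDec X X₀

/-- The order encoded by the list `L` induces a star decomposition of `(X, X₀)`. -/
def InducesStarDecomp (L : List V) (X : Finset (Finset V)) (X₀ : Finset V) : Prop :=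
  (L = [] ∧ X = ({∅} : Finset (Finset V)) ∧ X₀ = ∅) ∨
  ∃ hne : L ≠ [], L.Nodup ∧ StarPartition L.toFinset X ∧
    (∃ i < L.length, X₀ = (L.drop i).toFinset) ∧
    (∀ i, (hi : i + 1 < L.length) →
      ∃ U : Finset V, U.Nonempty ∧ U ⊆ verts (lk {L.get ⟨i, Nat.lt_of_succ_lt hi⟩} X) ∧
        starSet U (lk {L.get ⟨i, Nat.lt_of_succ_lt hi⟩} X) =
          overlap X (L.get ⟨i, Nat.lt_of_succ_lt hi⟩) ((L.drop (i + 1)).toFinset) ∧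
        StarDec (lk {L.get ⟨i, Nat.lt_of_succ_lt hi⟩} X) U) ∧
    (∃ U : Finset V, StarDec (lk {L.getLast hne} X) U)

/-- Star decomposability *in vertices* of the pair `(sd Y, Y₀)`; the data is the
underlying complex `Y` together with `Y₀ ⊆ V(Y)`.  The total order on `V(Y)` is
encoded as a duplicate-free list `L`. -/
inductive StarDecV : Finset (Finset V) → Finset V → Prop
  | base : StarDecV ({∅} : Finset (Finset V)) (∅ : Finset V)
  | step (Y : Finset (Finset V)) (Y₀ : Finset V) (k : ℤ) (hk : 0 ≤ k) (hpure : PureDim Y k)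
      (L : List V) (hne : L ≠ []) (hnd : L.Nodup) (hV : L.toFinset = verts Y)
      (horder : ∃ i < L.length, Y₀ = (L.drop i).toFinset)
      (hlink : ∀ i, (hi : i + 1 < L.length) →
        StarDecV (lk {L.get ⟨i, Nat.lt_of_succ_lt hi⟩} Y)
          (verts (lk {L.get ⟨i, Nat.lt_of_succ_lt hi⟩} Y) ∩ (L.drop (i + 1)).toFinset))
      (hlast : StarDecV (lk {L.getLast hne} Y) (verts (lk {L.getLast hne} Y))) :
      StarDecV Y Y₀

/-- The order encoded by the list `L` induces a star decomposition of
`(sd Y, Y₀)` in vertices. -/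
def InducesStarDecompV (L : List V) (Y : Finset (Finset V)) (Y₀ : Finset V) : Prop :=
  (L = [] ∧ Y = ({∅} : Finset (Finset V)) ∧ Y₀ = ∅) ∨
  ∃ hne : L ≠ [], L.Nodup ∧ L.toFinset = verts Y ∧
    (∃ i < L.length, Y₀ = (L.drop i).toFinset) ∧
    (∀ i, (hi : i + 1 < L.length) →
      StarDecV (lk {L.get ⟨i, Nat.lt_of_succ_lt hi⟩} Y)
        (verts (lk {L.get ⟨i, Nat.lt_of_succ_lt hi⟩} Y) ∩ (L.drop (i + 1)).toFinset)) ∧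
    StarDecV (lk {L.getLast hne} Y) (verts (lk {L.getLast hne} Y))

/-- Simplicial isomorphism between two complexes. -/
def SimpIso {α β : Type*} [DecidableEq α] [DecidableEq β]
    (K : Finset (Finset α)) (L : Finset (Finset β)) : Prop :=
  ∃ f : α → β, Set.InjOn f ↑(verts K) ∧ K.image (fun σ => σ.image f) = L

/-- Simplicial isomorphism of pairs (complex, subcomplex). -/
def SimpIsoPair {α β : Type*} [DecidableEq α] [DecidableEq β]
    (K K₁ : Finset (Finset α)) (L L₁ : Finset (Finset β)) : Prop :=
  ∃ f : α → β, Set.InjOn f ↑(verts K) ∧ K.image (fun σ => σ.image f) = L ∧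
    K₁.image (fun σ => σ.image f) = L₁

/-! Reduced simplicial homology (the empty face is included, so the chain
complex below, graded by cardinality of faces, computes *reduced* homology). -/

/-- Faces of `K` of cardinality `n`. -/
def kfaces (K : Finset (Finset V)) (n : ℕ) : Finset (Finset V) :=
  K.filter fun σ => σ.card = n

/-- The mod 2 boundary operator, from chains on faces of cardinality `n+1`
to chains on faces of cardinality `n`. -/
noncomputable def bdry2 (K : Finset (Finset V)) (n : ℕ) :
    (↥(kfaces K (n + 1)) → ZMod 2) →ₗ[ZMod 2] (↥(kfaces K n) → ZMod 2) :=
  Matrix.mulVecLin (Matrix.of fun (τ : ↥(kfaces K n)) (σ : ↥(kfaces K (n + 1))) =>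
    if (τ : Finset V) ⊆ (σ : Finset V) then (1 : ZMod 2) else 0)

/-- The reduced Betti number `β̃ᵢ(K; ℤ₂)`. -/
noncomputable def betti2 (K : Finset (Finset V)) (i : ℕ) : ℕ :=
  Module.finrank (ZMod 2) (LinearMap.ker (bdry2 K i)) -
    Module.finrank (ZMod 2) (LinearMap.range (bdry2 K (i + 1)))

/-- Signed incidence coefficient (with respect to an arbitrary, but fixed,
linear order on the vertices; reduced homology does not depend on the choice). -/
noncomputable def coeffInt (σ τ : Finset V) : ℤ :=
  letI : LinearOrder V := IsWellOrder.linearOrder WellOrderingRel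
  (σ \ τ).sum fun v => (-1 : ℤ) ^ ((σ.filter fun u => u < v).card)

/-- The integral boundary operator, from chains on faces of cardinality `n+1`
to chains on faces of cardinality `n`. -/
noncomputable def bdryZ (K : Finset (Finset V)) (n : ℕ) :
    (↥(kfaces K (n + 1)) → ℤ) →ₗ[ℤ] (↥(kfaces K n) → ℤ) :=
  Matrix.mulVecLin (Matrix.of fun (τ : ↥(kfaces K n)) (σ : ↥(kfaces K (n + 1))) =>
    if (τ : Finset V) ⊆ (σ : Finset V) then coeffInt (σ : Finset V) (τ : Finset V) else 0)

/-- `K` has trivial reduced (integral) homology: `H̃ₙ(K; ℤ) = 0` for all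
`n ≥ -1`. -/
def TrivialRedHomology (K : Finset (Finset V)) : Prop :=
  K.Nonempty ∧ LinearMap.range (bdryZ K 0) = ⊤ ∧
    ∀ n : ℕ, LinearMap.ker (bdryZ K n) = LinearMap.range (bdryZ K (n + 1))

/-- Reduced Euler characteristic. -/
def redEuler (K : Finset (Finset V)) : ℤ :=
  (∑ σ ∈ K.filter fun σ => σ ≠ ∅, (-1 : ℤ) ^ (σ.card - 1)) - 1

/-!
Over `ℤ₂` the reduced Betti numbers are read off the ranks of the incidence matrices:
`β̃ᵢ = fᵢ - rk ∂ᵢ - rk ∂ᵢ₊₁`. An elementary collapse of a free face `σ` into `τ` deletes from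
these matrices the column of `σ` (the sum of the columns of the other facets of `τ`), a pivot
(the row of `σ` has its only nonzero entry in the column of `τ`) and the zero row of `τ`; the
face numbers and ranks drop in step, so all Betti numbers and `χ̃` survive, and the collapsible
complex `K ∖ F` is `ℤ₂`-acyclic with `χ̃ = 0`. Putting the facets `F` back only adds columns to
the top boundary matrix `∂_d`, and its rank cannot grow: by acyclicity of `K ∖ F` in degree
`d - 1` the boundaries of `K ∖ F` already exhaust the `(d-1)`-cycles. So the lower Betti numbers
of `K` vanish, each facet of `F` contributes one `d`-cycle, and `χ̃` changes by `(-1)^d |F|`.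
-/

end Paper

namespace Matrix

open Submodule

variable {m n m' n' K : Type*} [Field K]

theorem rank_submatrix_cols_eq_of_mem_span [Fintype n] [Fintype n'] (M : Matrix m n K)
    (f : n' → n)
    (h : ∀ j ∉ Set.range f, M.col j ∈ span K (Set.range (M.col ∘ f))) :
    (M.submatrix id f).rank = M.rank := by
  rw [rank_eq_finrank_span_cols, rank_eq_finrank_span_cols]
  suffices hspan : span K (Set.range (M.col ∘ f)) = span K (Set.range M.col) by
    rw [← hspan]; rfl
  refine le_antisymm (span_mono (Set.range_comp_subset_range f M.col)) (span_le.2 ?_)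
  rintro _ ⟨j, rfl⟩
  by_cases hj : j ∈ Set.range f
  · obtain ⟨j', rfl⟩ := hj
    exact subset_span ⟨j', rfl⟩
  · exact h j hj

theorem rank_submatrix_rows_eq_of_row_eq_zero [Fintype m] [Fintype n] [Fintype m']
    (M : Matrix m n K) (g : m' → m) (h : ∀ i ∉ Set.range g, M.row i = 0) :
    (M.submatrix g id).rank = M.rank := by
  rw [rank_eq_finrank_span_row, rank_eq_finrank_span_row]
  suffices hspan : span K (Set.range (M.row ∘ g)) = span K (Set.range M.row) by
    rw [← hspan]; rfl
  refine le_antisymm (span_mono (Set.range_comp_subset_range g M.row)) (span_le.2 ?_)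
  rintro _ ⟨i, rfl⟩
  by_cases hi : i ∈ Set.range g
  · obtain ⟨i', rfl⟩ := hi
    exact subset_span ⟨i', rfl⟩
  · rw [h i hi]
    exact zero_mem _

theorem rank_eq_rank_submatrix_add_one_of_pivot [Fintype m] [Fintype n] [Fintype m'] [Fintype n']
    (M : Matrix m n K) {i₀ : m} {j₀ : n} (hpiv : M i₀ j₀ ≠ 0) (hrow : ∀ j ≠ j₀, M i₀ j = 0)
    {g : m' → m} {f : n' → n}
    (hg : Set.range g = {i₀}ᶜ) (hf : Set.range f = {j₀}ᶜ) :
    M.rank = (M.submatrix g f).rank + 1 := by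
  have hf₀ : ∀ j', f j' ≠ j₀ := fun j' => by
    simpa [hf] using Set.mem_range_self (f := f) j'
  have hrows : (M.submatrix g f).rank = (M.submatrix id f).rank := by
    refine (M.submatrix id f).rank_submatrix_rows_eq_of_row_eq_zero g fun i hi => ?_
    rw [hg, Set.notMem_compl_iff, Set.mem_singleton_iff] at hi
    ext j'
    exact hi ▸ hrow _ (hf₀ j')
  have hcols : Set.range M.col = insert (M.col j₀) (Set.range (M.col ∘ f)) := by
    rw [Set.range_comp, hf, ← Set.image_insert_eq, Set.insert_eq, Set.union_compl_self,
      Set.image_univ]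
  have hnotMem : M.col j₀ ∉ span K (Set.range (M.col ∘ f)) := by
    have hle : span K (Set.range (M.col ∘ f)) ≤ LinearMap.ker (LinearMap.proj i₀) := by
      rw [span_le]
      rintro _ ⟨j', rfl⟩
      exact hrow _ (hf₀ j')
    exact fun hmem => hpiv (hle hmem)
  rw [hrows, rank_eq_finrank_span_cols, rank_eq_finrank_span_cols, hcols, span_insert, sup_comm,
    finrank_sup_span_singleton hnotMem]
  rfl

end Matrix

namespace Finset

variable {α : Type*} [DecidableEq α]

theorem filter_superset_powersetCard_eq_image {a t : Finset α} (hat : a ⊆ t) :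
    {s ∈ t.powersetCard (#a + 1) | a ⊆ s} = (t \ a).image (insert · a) := by
  ext s
  simp only [mem_filter, mem_powersetCard, mem_image, mem_sdiff]
  constructor
  · rintro ⟨⟨hst, hcard⟩, has⟩
    obtain ⟨v, hva, rfl⟩ := exists_eq_insert_iff.2 ⟨has, hcard.symm⟩
    exact ⟨v, ⟨hst (mem_insert_self v a), hva⟩, rfl⟩
  · rintro ⟨v, ⟨hvt, hva⟩, rfl⟩
    exact ⟨⟨insert_subset hvt hat, card_insert_of_notMem hva⟩, subset_insert v a⟩

theorem even_card_filter_superset_powersetCard {a t : Finset α} (h : #a + 2 = #t) :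
    Even #{s ∈ t.powersetCard (#a + 1) | a ⊆ s} := by
  by_cases hat : a ⊆ t
  · rw [filter_superset_powersetCard_eq_image hat, card_image_of_injOn, card_sdiff_of_subset hat]
    · exact ⟨1, by omega⟩
    · intro v hv v' _ hvv'
      exact (insert_inj (mem_sdiff.1 hv).2).1 hvv'
  · rw [filter_false_of_mem fun s hs has => hat (has.trans (mem_powersetCard.1 hs).1)]
    simp

end Finset

namespace Paper

open Finset

variable {V : Type*}

theorem mem_kfaces {K : Finset (Finset V)} {s : Finset V} {n : ℕ} :
    s ∈ kfaces K n ↔ s ∈ K ∧ #s = n :=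
  mem_filter

theorem kfaces_eq_empty_of_lt {K : Finset (Finset V)} {d : ℕ} (hpure : PureDim K d) {m : ℕ}
    (hm : d + 1 < m) : kfaces K m = ∅ := by
  refine eq_empty_of_forall_notMem fun s hs => ?_
  have := hpure.2.1 s (mem_kfaces.1 hs).1
  rw [(mem_kfaces.1 hs).2] at this
  omega

variable [DecidableEq V]

def incVec (A : Finset (Finset V)) (s : Finset V) : A → ZMod 2 :=
  fun a => if (a : Finset V) ⊆ s then 1 else 0

def incMat (A B : Finset (Finset V)) : Matrix A B (ZMod 2) :=
  Matrix.of fun a b => incVec A b a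

/-- The rank of `bdry2 K n`, whose matrix is `incMat (kfaces K n) (kfaces K (n + 1))`: the
boundary map from faces of cardinality `n + 1` to faces of cardinality `n`. -/
noncomputable def bdryRank (K : Finset (Finset V)) (n : ℕ) : ℕ :=
  (incMat (kfaces K n) (kfaces K (n + 1))).rank

theorem incMat_eq_submatrix {A A' B B' : Finset (Finset V)} (hA : A' ⊆ A) (hB : B' ⊆ B) :
    incMat A' B' =
      (incMat A B).submatrix (fun a : ↥A' => ⟨a, hA a.2⟩) (fun b : ↥B' => ⟨b, hB b.2⟩) :=
  rfl

theorem range_inclusion_erase {A : Finset (Finset V)} {a : Finset V} (ha : a ∈ A) :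
    Set.range (fun x : ↥(A.erase a) => (⟨x, erase_subset a A x.2⟩ : ↥A)) = {⟨a, ha⟩}ᶜ := by
  ext ⟨x, hx⟩
  simp only [Set.mem_range, Set.mem_compl_iff, Set.mem_singleton_iff, Subtype.mk.injEq,
    Subtype.exists, mem_erase]
  exact ⟨fun ⟨_, ⟨hne, _⟩, hxy⟩ => hxy ▸ hne, fun hne => ⟨x, ⟨hne, hx⟩, rfl⟩⟩

theorem sum_incVec_powersetCard {A : Finset (Finset V)} {n : ℕ} (hA : ∀ a ∈ A, #a = n)
    {t : Finset V} (ht : #t = n + 2) : ∑ s ∈ t.powersetCard (n + 1), incVec A s = 0 := by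
  funext a
  rw [Finset.sum_apply, Pi.zero_apply]
  simp only [incVec]
  rw [sum_boole, ZMod.natCast_eq_zero_iff_even, ← hA a a.2]
  exact even_card_filter_superset_powersetCard (by rw [hA a a.2, ht])

theorem kfaces_filter_subset_eq_powersetCard {K : Finset (Finset V)} (hK : IsCplx K) {t : Finset V}
    (ht : t ∈ K) (n : ℕ) : {s ∈ kfaces K n | s ⊆ t} = t.powersetCard n := by
  ext s
  simp only [kfaces, mem_filter, mem_powersetCard]
  exact ⟨fun ⟨⟨_, hs⟩, hst⟩ => ⟨hst, hs⟩, fun ⟨hst, hs⟩ => ⟨⟨hK t ht s hst, hs⟩, hst⟩⟩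

theorem incMat_mul_incMat_kfaces_eq_zero {K : Finset (Finset V)} (hK : IsCplx K) (n : ℕ) :
    incMat (kfaces K n) (kfaces K (n + 1)) * incMat (kfaces K (n + 1)) (kfaces K (n + 2)) = 0 := by
  ext a t
  have hterm : ∀ b : ↥(kfaces K (n + 1)), incMat _ _ a b * incMat _ _ b t =
      if (b : Finset V) ⊆ t then incVec (kfaces K n) b a else 0 := fun b => by
    by_cases hbt : (b : Finset V) ⊆ t <;> simp [incMat, incVec, hbt]
  rw [Matrix.mul_apply, Matrix.zero_apply, Finset.sum_congr rfl fun b _ => hterm b,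
    Finset.sum_coe_sort (kfaces K (n + 1)) fun b => if b ⊆ t then incVec (kfaces K n) b a else 0,
    ← sum_filter, kfaces_filter_subset_eq_powersetCard hK (mem_kfaces.1 t.2).1,
    ← Finset.sum_apply, sum_incVec_powersetCard (A := kfaces K n)
      (fun a ha => (mem_kfaces.1 ha).2) (mem_kfaces.1 t.2).2, Pi.zero_apply]

theorem betti2_eq_card_sub (K : Finset (Finset V)) (i : ℕ) :
    betti2 K i = #(kfaces K (i + 1)) - bdryRank K i - bdryRank K (i + 1) := by
  have hrange : ∀ n, Module.finrank (ZMod 2) (LinearMap.range (bdry2 K n)) = bdryRank K n :=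
    fun _ => rfl
  have hrank := LinearMap.finrank_range_add_finrank_ker (bdry2 K i)
  rw [Module.finrank_pi, Fintype.card_coe, hrange] at hrank
  rw [betti2, hrange]
  omega

theorem bdryRank_add_bdryRank_le {K : Finset (Finset V)} (hK : IsCplx K) (n : ℕ) :
    bdryRank K n + bdryRank K (n + 1) ≤ #(kfaces K (n + 1)) :=
  (Matrix.rank_add_rank_le_card_of_mul_eq_zero (incMat_mul_incMat_kfaces_eq_zero hK n)).trans_eq
    (Fintype.card_coe _)

theorem bdryRank_le_card (K : Finset (Finset V)) (n : ℕ) : bdryRank K n ≤ #(kfaces K (n + 1)) :=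
  (Matrix.rank_le_card_width _).trans_eq (Fintype.card_coe _)

theorem bdryRank_le_card_kfaces (K : Finset (Finset V)) (n : ℕ) : bdryRank K n ≤ #(kfaces K n) :=
  (Matrix.rank_le_card_height _).trans_eq (Fintype.card_coe _)

theorem bdryRank_mono {K L : Finset (Finset V)} (h : L ⊆ K) (n : ℕ) :
    bdryRank L n ≤ bdryRank K n := by
  have hsub : ∀ m, kfaces L m ⊆ kfaces K m := fun m => filter_subset_filter _ h
  rw [bdryRank, incMat_eq_submatrix (hsub n) (hsub (n + 1))]
  exact Matrix.rank_submatrix_le _ _ _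

theorem one_le_bdryRank_zero {K : Finset (Finset V)} (h₀ : ∅ ∈ K) {w : V} (hw : {w} ∈ K) :
    1 ≤ bdryRank K 0 := by
  have hsub : (incMat (kfaces K 0) (kfaces K 1)).submatrix
      (fun _ : Unit => ⟨∅, mem_kfaces.2 ⟨h₀, rfl⟩⟩)
      (fun _ : Unit => ⟨{w}, mem_kfaces.2 ⟨hw, card_singleton w⟩⟩) = 1 := by
    ext
    simp [incMat, incVec]
  calc 1 = (1 : Matrix Unit Unit (ZMod 2)).rank := by rw [Matrix.rank_one, Fintype.card_unit]
    _ ≤ bdryRank K 0 := hsub ▸ Matrix.rank_submatrix_le _ _ _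

theorem kfaces_erase (K : Finset (Finset V)) (ρ : Finset V) (m : ℕ) :
    kfaces (K.erase ρ) m = (kfaces K m).erase ρ :=
  filter_erase _ _ _

theorem kfaces_erase_of_card_ne (K : Finset (Finset V)) {ρ : Finset V} {m : ℕ} (h : #ρ ≠ m) :
    kfaces (K.erase ρ) m = kfaces K m := by
  rw [kfaces_erase]
  exact erase_eq_of_notMem fun hρ => h (mem_kfaces.1 hρ).2

theorem card_eq_card_add_one_of_free {X : Finset (Finset V)} (hX : IsCplx X) {σ τ : Finset V}
    (hτ : τ ∈ X) (hστ : σ ⊂ τ) (huniq : ∀ ρ ∈ X, σ ⊂ ρ → ρ = τ) : #τ = #σ + 1 := by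
  obtain ⟨v, hvτ, hvσ⟩ := exists_of_ssubset hστ
  rw [← huniq _ (hX τ hτ _ (insert_subset hvτ hστ.subset)) (ssubset_insert hvσ),
    card_insert_of_notMem hvσ]

section Collapse

variable {X : Finset (Finset V)} {σ τ : Finset V} {n : ℕ}

theorem isCplx_erase_erase_of_free (hX : IsCplx X) (hστ : σ ⊂ τ)
    (huniq : ∀ ρ ∈ X, σ ⊂ ρ → ρ = τ) : IsCplx ((X.erase σ).erase τ) := by
  intro ρ hρ υ hυρ
  simp only [mem_erase] at hρ ⊢
  obtain ⟨hρτ, hρσ, hρX⟩ := hρ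
  have hσρ : ¬σ ⊆ ρ := fun h => hρτ (huniq ρ hρX (ssubset_of_subset_of_ne h (Ne.symm hρσ)))
  refine ⟨?_, ?_, hX ρ hρX υ hυρ⟩
  · rintro rfl
    exact hσρ (hστ.subset.trans hυρ)
  · rintro rfl
    exact hσρ hυρ

theorem bdryRank_elemCollapse_col (hX : IsCplx X) (hσX : σ ∈ X) (hτ : τ ∈ X)
    (hστ : σ ⊂ τ) (hσ : #σ = n + 1) (hτn : #τ = n + 2) :
    bdryRank ((X.erase σ).erase τ) n = bdryRank X n := by
  have hσm : σ ∈ kfaces X (n + 1) := mem_kfaces.2 ⟨hσX, hσ⟩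
  rw [bdryRank, bdryRank, kfaces_erase_of_card_ne _ (by omega : #τ ≠ n),
    kfaces_erase_of_card_ne _ (by omega : #σ ≠ n),
    kfaces_erase_of_card_ne _ (by omega : #τ ≠ n + 1),
    kfaces_erase, incMat_eq_submatrix subset_rfl (erase_subset _ _)]
  refine Matrix.rank_submatrix_cols_eq_of_mem_span _ _ fun j hj => ?_
  rw [range_inclusion_erase hσm, Set.notMem_compl_iff, Set.mem_singleton_iff] at hj
  subst hj
  -- the facets of `τ` sum to zero: this is `∂∂τ = 0`
  have hsum := sum_incVec_powersetCard (A := kfaces X n) (fun a ha => (mem_kfaces.1 ha).2) hτn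
  rw [← sum_erase_add _ _ (mem_powersetCard.2 ⟨hστ.subset, hσ⟩)] at hsum
  change incVec (kfaces X n) σ ∈ _
  rw [eq_neg_of_add_eq_zero_right hsum]
  refine neg_mem (sum_mem fun s hs => Submodule.subset_span ⟨⟨s, ?_⟩, rfl⟩)
  obtain ⟨hsσ, hs⟩ := mem_erase.1 hs
  rw [mem_powersetCard] at hs
  exact mem_erase.2 ⟨hsσ, mem_kfaces.2 ⟨hX τ hτ s hs.1, hs.2⟩⟩

theorem bdryRank_elemCollapse_pivot (hσX : σ ∈ X) (hτ : τ ∈ X)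
    (hστ : σ ⊂ τ) (huniq : ∀ ρ ∈ X, σ ⊂ ρ → ρ = τ) (hσ : #σ = n + 1) (hτn : #τ = n + 2) :
    bdryRank X (n + 1) = bdryRank ((X.erase σ).erase τ) (n + 1) + 1 := by
  have hσm : σ ∈ kfaces X (n + 1) := mem_kfaces.2 ⟨hσX, hσ⟩
  have hτm : τ ∈ kfaces X (n + 2) := mem_kfaces.2 ⟨hτ, hτn⟩
  rw [bdryRank, bdryRank, kfaces_erase_of_card_ne _ (by omega : #τ ≠ n + 1), kfaces_erase,
    kfaces_erase, kfaces_erase_of_card_ne _ (by omega : #σ ≠ n + 1 + 1),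
    incMat_eq_submatrix (erase_subset _ _) (erase_subset _ _)]
  refine Matrix.rank_eq_rank_submatrix_add_one_of_pivot _ (i₀ := ⟨σ, hσm⟩) (j₀ := ⟨τ, hτm⟩) ?_ ?_
    (range_inclusion_erase hσm) (range_inclusion_erase hτm)
  · simp [incMat, incVec, hστ.subset]
  · rintro ⟨ρ, hρ⟩ hρτ
    simp only [incMat, incVec, Matrix.of_apply, ite_eq_right_iff, one_ne_zero, imp_false]
    intro hσρ
    have hρ' := mem_kfaces.1 hρ
    exact hρτ (Subtype.ext (huniq ρ hρ'.1 (ssubset_of_subset_of_ne hσρ (by rintro rfl; omega))))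

theorem bdryRank_elemCollapse_row (hτ : τ ∈ X)
    (hστ : σ ⊂ τ) (huniq : ∀ ρ ∈ X, σ ⊂ ρ → ρ = τ) (hσ : #σ = n + 1) (hτn : #τ = n + 2) :
    bdryRank ((X.erase σ).erase τ) (n + 2) = bdryRank X (n + 2) := by
  have hτm : τ ∈ kfaces X (n + 2) := mem_kfaces.2 ⟨hτ, hτn⟩
  rw [bdryRank, bdryRank, kfaces_erase, kfaces_erase_of_card_ne _ (by omega : #σ ≠ n + 2),
    kfaces_erase_of_card_ne _ (by omega : #τ ≠ n + 2 + 1),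
    kfaces_erase_of_card_ne _ (by omega : #σ ≠ n + 2 + 1),
    incMat_eq_submatrix (erase_subset _ _) subset_rfl]
  refine Matrix.rank_submatrix_rows_eq_of_row_eq_zero _ _ fun i hi => ?_
  rw [range_inclusion_erase hτm, Set.notMem_compl_iff, Set.mem_singleton_iff] at hi
  subst hi
  ext ⟨ρ, hρ⟩
  simp only [Matrix.row, incMat, incVec, Matrix.of_apply, Pi.zero_apply, ite_eq_right_iff,
    one_ne_zero, imp_false]
  intro hτρ
  have hρ' := mem_kfaces.1 hρ
  have := huniq ρ hρ'.1 (hστ.trans_subset hτρ)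
  subst this
  omega

theorem bdryRank_elemCollapse (hX : IsCplx X) (hσX : σ ∈ X) (hτ : τ ∈ X) (hστ : σ ⊂ τ)
    (huniq : ∀ ρ ∈ X, σ ⊂ ρ → ρ = τ) (hσ : #σ = n + 1) (hτn : #τ = n + 2) (m : ℕ) :
    bdryRank X m = bdryRank ((X.erase σ).erase τ) m + if m = n + 1 then 1 else 0 := by
  obtain rfl | rfl | rfl | hm :
      m = n ∨ m = n + 1 ∨ m = n + 2 ∨ (m ≠ n ∧ m ≠ n + 1 ∧ m ≠ n + 2) := by
    omega
  · rw [bdryRank_elemCollapse_col hX hσX hτ hστ hσ hτn, if_neg (by omega), add_zero]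
  · rw [bdryRank_elemCollapse_pivot hσX hτ hστ huniq hσ hτn, if_pos rfl]
  · rw [bdryRank_elemCollapse_row hτ hστ huniq hσ hτn, if_neg (by omega), add_zero]
  · rw [if_neg hm.2.1, add_zero, bdryRank, bdryRank, kfaces_erase_of_card_ne _ (by omega : #τ ≠ m),
      kfaces_erase_of_card_ne _ (by omega : #σ ≠ m),
      kfaces_erase_of_card_ne _ (by omega : #τ ≠ m + 1),
      kfaces_erase_of_card_ne _ (by omega : #σ ≠ m + 1)]

theorem card_kfaces_elemCollapse (hσX : σ ∈ X) (hτ : τ ∈ X) (hσ : #σ = n + 1)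
    (hτn : #τ = n + 2) (m : ℕ) :
    #(kfaces X m) = #(kfaces ((X.erase σ).erase τ) m) + if m = n + 1 ∨ m = n + 2 then 1 else 0 := by
  obtain rfl | rfl | hm : m = n + 1 ∨ m = n + 2 ∨ (m ≠ n + 1 ∧ m ≠ n + 2) := by omega
  · rw [kfaces_erase_of_card_ne _ (by omega : #τ ≠ n + 1), kfaces_erase,
      card_erase_of_mem (mem_kfaces.2 ⟨hσX, hσ⟩), if_pos (Or.inl rfl)]
    have := card_pos.2 ⟨σ, mem_kfaces.2 ⟨hσX, hσ⟩⟩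
    omega
  · rw [kfaces_erase, kfaces_erase_of_card_ne _ (by omega : #σ ≠ n + 2),
      card_erase_of_mem (mem_kfaces.2 ⟨hτ, hτn⟩), if_pos (Or.inr rfl)]
    have := card_pos.2 ⟨τ, mem_kfaces.2 ⟨hτ, hτn⟩⟩
    omega
  · rw [kfaces_erase_of_card_ne _ (by omega : #τ ≠ m),
      kfaces_erase_of_card_ne _ (by omega : #σ ≠ m), if_neg (by omega), add_zero]

end Collapse

theorem ElemCollapse.betti2_eq {K K' : Finset (Finset V)} (h : ElemCollapse K K') (hK : IsCplx K)
    (h₀ : ∅ ∈ K') (i : ℕ) : betti2 K' i = betti2 K i := by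
  obtain ⟨σ, hσK, τ, hτK, hστ, huniq, rfl⟩ := h
  obtain ⟨n, hσ⟩ : ∃ n, #σ = n + 1 := by
    refine Nat.exists_eq_add_one.2 (card_pos.2 (nonempty_iff_ne_empty.2 ?_))
    rintro rfl
    exact (mem_erase.1 (mem_of_mem_erase h₀)).1 rfl
  have hτ : #τ = n + 2 := by rw [card_eq_card_add_one_of_free hK hτK hστ huniq, hσ]
  have hc := card_kfaces_elemCollapse hσK hτK hσ hτ (i + 1)
  have hr := bdryRank_elemCollapse hK hσK hτK hστ huniq hσ hτ
  have hri := hr i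
  have hri' := hr (i + 1)
  rw [betti2_eq_card_sub, betti2_eq_card_sub]
  split_ifs at hc hri hri' <;> omega

theorem ElemCollapse.subset {K K' : Finset (Finset V)} (h : ElemCollapse K K') : K' ⊆ K := by
  obtain ⟨σ, -, τ, -, -, -, rfl⟩ := h
  exact (erase_subset _ _).trans (erase_subset _ _)

theorem ElemCollapse.isCplx {K K' : Finset (Finset V)} (h : ElemCollapse K K') (hK : IsCplx K) :
    IsCplx K' := by
  obtain ⟨σ, -, τ, -, hστ, huniq, rfl⟩ := h
  exact isCplx_erase_erase_of_free hK hστ huniq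

theorem redEuler_eq_sdiff_add {K S : Finset (Finset V)} (hS : S ⊆ K) (h₀ : ∅ ∉ S) :
    redEuler K = redEuler (K \ S) + ∑ s ∈ S, (-1 : ℤ) ^ (#s - 1) := by
  have hS₀ : ∑ s ∈ S, (if s ≠ ∅ then (-1 : ℤ) ^ (#s - 1) else 0) = ∑ s ∈ S, (-1 : ℤ) ^ (#s - 1) :=
    sum_congr rfl fun s hs => if_pos fun h : s = ∅ => h₀ (h ▸ hs)
  rw [redEuler, redEuler, sum_filter, sum_filter, ← sum_sdiff hS, hS₀]
  ring

theorem ElemCollapse.redEuler_eq {K K' : Finset (Finset V)} (h : ElemCollapse K K')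
    (hK : IsCplx K) (h₀ : ∅ ∈ K') : redEuler K' = redEuler K := by
  obtain ⟨σ, hσK, τ, hτK, hστ, huniq, rfl⟩ := h
  have hσ : σ ≠ ∅ := by
    rintro rfl
    exact (mem_erase.1 (mem_of_mem_erase h₀)).1 rfl
  have hτσ : #τ - 1 = (#σ - 1) + 1 := by
    rw [card_eq_card_add_one_of_free hK hτK hστ huniq]
    have := card_pos.2 (nonempty_iff_ne_empty.2 hσ)
    omega
  have hpair : (K.erase σ).erase τ = K \ {σ, τ} := by
    ext ρ
    simp only [mem_erase, mem_sdiff, mem_insert, mem_singleton]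
    tauto
  rw [hpair, redEuler_eq_sdiff_add (insert_subset hσK (singleton_subset_iff.2 hτK)),
    sum_pair hστ.ne, hτσ, pow_succ]
  · ring
  · simp only [mem_insert, mem_singleton, not_or]
    refine ⟨Ne.symm hσ, ?_⟩
    rintro rfl
    exact not_ssubset_empty σ hστ

theorem CollapsesTo.subset {K K' : Finset (Finset V)} (h : CollapsesTo K K') : K' ⊆ K := by
  induction h with
  | refl => exact subset_rfl
  | tail _ h ih => exact h.subset.trans ih

theorem CollapsesTo.isCplx {K K' : Finset (Finset V)} (h : CollapsesTo K K') (hK : IsCplx K) :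
    IsCplx K' := by
  induction h with
  | refl => exact hK
  | tail _ h ih => exact h.isCplx ih

theorem CollapsesTo.betti2_eq {K K' : Finset (Finset V)} (h : CollapsesTo K K') (hK : IsCplx K)
    (h₀ : ∅ ∈ K') (i : ℕ) : betti2 K' i = betti2 K i := by
  induction h with
  | refl => rfl
  | tail hKK₁ h ih => rw [h.betti2_eq (CollapsesTo.isCplx hKK₁ hK) h₀, ih (h.subset h₀)]

theorem CollapsesTo.redEuler_eq {K K' : Finset (Finset V)} (h : CollapsesTo K K') (hK : IsCplx K)
    (h₀ : ∅ ∈ K') : redEuler K' = redEuler K := by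
  induction h with
  | refl => rfl
  | tail hKK₁ h ih => rw [h.redEuler_eq (CollapsesTo.isCplx hKK₁ hK) h₀, ih (h.subset h₀)]

theorem betti2_point (w : V) (i : ℕ) : betti2 ({∅, {w}} : Finset (Finset V)) i = 0 := by
  rw [betti2_eq_card_sub]
  rcases i with _ | j
  · have hc : #(kfaces ({∅, {w}} : Finset (Finset V)) 1) ≤ 1 :=
      card_le_one.2 fun a ha b hb => by
        simp only [mem_kfaces, mem_insert, mem_singleton] at ha hb
        aesop
    have hr := one_le_bdryRank_zero (K := {∅, {w}}) (by simp) (w := w) (by simp)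
    rw [zero_add]
    omega
  · have hc : kfaces ({∅, {w}} : Finset (Finset V)) (j + 2) = ∅ := by
      ext s
      simp only [mem_kfaces, mem_insert, mem_singleton, notMem_empty, iff_false, not_and]
      rintro (rfl | rfl) <;> simp
    rw [hc, card_empty, Nat.zero_sub, Nat.zero_sub]

theorem redEuler_point (w : V) : redEuler ({∅, {w}} : Finset (Finset V)) = 0 := by
  simp [redEuler, filter_insert, filter_singleton]

theorem Collapsible.betti2_eq_zero {K : Finset (Finset V)} (h : Collapsible K) (hK : IsCplx K)
    (i : ℕ) : betti2 K i = 0 := by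
  obtain ⟨w, hw⟩ := h
  rw [← hw.betti2_eq hK (by simp) i, betti2_point]

theorem Collapsible.redEuler_eq_zero {K : Finset (Finset V)} (h : Collapsible K) (hK : IsCplx K) :
    redEuler K = 0 := by
  obtain ⟨w, hw⟩ := h
  rw [← hw.redEuler_eq hK (by simp), redEuler_point]

section FacetRemoval

variable {K F : Finset (Finset V)} {d : ℕ}

theorem card_eq_of_mem_facets (hpure : PureDim K d) {ρ : Finset V} (hρ : ρ ∈ facets K) :
    #ρ = d + 1 := by
  obtain ⟨hρK, hmax⟩ := mem_filter.1 hρ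
  obtain ⟨τ, hτK, hρτ, hτ⟩ := hpure.2.2 ρ hρK
  rw [hmax τ hτK hρτ]
  exact_mod_cast hτ

theorem isCplx_sdiff_facets (hK : IsCplx K) (hF : F ⊆ facets K) : IsCplx (K \ F) := by
  intro σ hσ τ hτσ
  obtain ⟨hσK, hσF⟩ := mem_sdiff.1 hσ
  refine mem_sdiff.2 ⟨hK σ hσK τ hτσ, fun hτF => hσF ?_⟩
  rwa [← (mem_filter.1 (hF hτF)).2 σ hσK hτσ]

theorem kfaces_sdiff_facets_of_ne (hpure : PureDim K d) (hF : F ⊆ facets K) {m : ℕ}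
    (hm : m ≠ d + 1) : kfaces (K \ F) m = kfaces K m := by
  ext s
  simp only [mem_kfaces, mem_sdiff]
  refine ⟨fun h => ⟨h.1.1, h.2⟩, fun h => ⟨⟨h.1, fun hsF => hm ?_⟩, h.2⟩⟩
  rw [← h.2, card_eq_of_mem_facets hpure (hF hsF)]

theorem card_kfaces_sdiff_facets (hpure : PureDim K d) (hF : F ⊆ facets K) :
    #(kfaces K (d + 1)) = #(kfaces (K \ F) (d + 1)) + #F := by
  have hFk : F ⊆ kfaces K (d + 1) := fun ρ hρ =>
    mem_kfaces.2 ⟨(mem_filter.1 (hF hρ)).1, card_eq_of_mem_facets hpure (hF hρ)⟩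
  have hsdiff : kfaces (K \ F) (d + 1) = kfaces K (d + 1) \ F := by
    ext s
    simp only [mem_kfaces, mem_sdiff]
    tauto
  rw [hsdiff, card_sdiff_of_subset hFk, Nat.sub_add_cancel (card_le_card hFk)]

theorem bdryRank_top_eq_zero (hpure : PureDim K d) {L : Finset (Finset V)} (hL : L ⊆ K) :
    bdryRank L (d + 1) = 0 := by
  have := (bdryRank_mono hL (d + 1)).trans (bdryRank_le_card K (d + 1))
  rwa [kfaces_eq_empty_of_lt hpure (by omega), card_empty, Nat.le_zero] at this

theorem bdryRank_sdiff_facets (hK : IsCplx K) (hpure : PureDim K d) (hF : F ⊆ facets K)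
    (hcol : Collapsible (K \ F)) (m : ℕ) : bdryRank (K \ F) m = bdryRank K m := by
  have hoff : ∀ m, m ≠ d → m ≠ d + 1 → bdryRank (K \ F) m = bdryRank K m := fun m h₁ h₂ => by
    rw [bdryRank, bdryRank, kfaces_sdiff_facets_of_ne hpure hF h₂,
      kfaces_sdiff_facets_of_ne hpure hF (by omega : m + 1 ≠ d + 1)]
  obtain hm | rfl | rfl : (m ≠ d ∧ m ≠ d + 1) ∨ m = d ∨ m = d + 1 := by omega
  · exact hoff m hm.1 hm.2
  · refine le_antisymm (bdryRank_mono sdiff_subset m) ?_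
    rcases m with _ | e
    -- `∅` is the only face of cardinality `0`, and a vertex survives the collapse
    · obtain ⟨w, hw⟩ := hcol
      have hK₀ : #(kfaces K 0) ≤ 1 := card_le_one.2 fun a ha b hb => by
        rw [card_eq_zero.1 (mem_kfaces.1 ha).2, card_eq_zero.1 (mem_kfaces.1 hb).2]
      exact (bdryRank_le_card_kfaces K 0).trans
        (hK₀.trans (one_le_bdryRank_zero (hw.subset (by simp)) (w := w) (hw.subset (by simp))))
    · have hexact := hcol.betti2_eq_zero (isCplx_sdiff_facets hK hF) e
      rw [betti2_eq_card_sub, kfaces_sdiff_facets_of_ne hpure hF (by omega),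
        hoff e (by omega) (by omega)] at hexact
      have := bdryRank_add_bdryRank_le hK e
      omega
  · rw [bdryRank_top_eq_zero hpure sdiff_subset, bdryRank_top_eq_zero hpure subset_rfl]

end FacetRemoval

/-- If removing the set `F` of facets from the pure `d`-complex `K`
leaves a collapsible complex, then `|F| = β̃_d(K; ℤ₂)`, all lower reduced Betti numbers
vanish, and `χ̃(K) = (-1)^d β̃_d(K; ℤ₂)`. -/
theorem RC_betti {V : Type*} [DecidableEq V] (K : Finset (Finset V)) (hK : IsCplx K)
    (d : ℕ) (hpure : PureDim K (d : ℤ)) (F : Finset (Finset V)) (hF : F ⊆ facets K)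
    (hcol : Collapsible (K \ F)) :
    F.card = betti2 K d ∧ (∀ i : ℕ, i < d → betti2 K i = 0) ∧
      redEuler K = (-1 : ℤ) ^ d * (betti2 K d : ℤ) := by
  have hL := isCplx_sdiff_facets hK hF
  have hr := bdryRank_sdiff_facets hK hpure hF hcol
  have htop : betti2 K d = #F := by
    have hexact := hcol.betti2_eq_zero hL d
    have := bdryRank_le_card (K \ F) d
    have := bdryRank_top_eq_zero hpure (sdiff_subset : K \ F ⊆ K)
    rw [betti2_eq_card_sub] at hexact ⊢
    rw [card_kfaces_sdiff_facets hpure hF, ← hr, ← hr]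
    omega
  refine ⟨htop.symm, fun i hi => ?_, ?_⟩
  · rw [← hcol.betti2_eq_zero hL i, betti2_eq_card_sub, betti2_eq_card_sub, hr, hr,
      kfaces_sdiff_facets_of_ne hpure hF (by omega)]
  · have hF₀ : ∅ ∉ F := fun h => by simpa using card_eq_of_mem_facets hpure (hF h)
    have hsum : ∑ s ∈ F, (-1 : ℤ) ^ (#s - 1) = #F * (-1) ^ d := by
      rw [sum_congr rfl fun s hs => by rw [card_eq_of_mem_facets hpure (hF hs), Nat.add_sub_cancel],
        sum_const, nsmul_eq_mul]
    rw [redEuler_eq_sdiff_add (hF.trans (filter_subset _ _)) hF₀, hcol.redEuler_eq_zero hL, hsum,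
      htop]
    ring

end Paper
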